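/- Let z = ((s_k, v_k))_{k≥1} ∈ Z↓ and θ ∈ ℝ. For a marked partition x and n ≥ 1, let S_θ^{(n)}(x) := Σ_B (mark of B)^θ ∈ [0,∞], the sum over the blocks B of the restriction of x to {1,…,n} (with the convention 0^θ = 0). Then ∫ S_θ^{(n)}(x) ρ_z(dx) = Σ_{i≥1} (1 − (1 − s_i)^n) · v_i^θ ∈ [0,∞]; in particular, n ↦ ∫ S_θ^{(n)} dρ_z is nondecreasing and converges to Σ_{i≥1} v_i^θ as n → ∞. -/

import Mathlib

open MeasureTheory ProbabilityTheory Filter Topology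

/-- A marked partition of `ℕ`: an equivalence relation together with a mark function
that is constant on each block. -/
structure MarkedPartition where
  rel : ℕ → ℕ → Prop
  refl : ∀ i, rel i i
  symm : ∀ {i j}, rel i j → rel j i
  trans : ∀ {i j k}, rel i j → rel j k → rel i k
  v : ℕ → ℝ
  consistent : ∀ {i j}, rel i j → v i = v j

namespace MarkedPartition

/-- The σ-algebra on marked partitions, generated by the maps `x ↦ x.rel i j` and `x ↦ x.v i`. -/
instance : MeasurableSpace MarkedPartition :=
  (⨆ (i : ℕ) (j : ℕ), MeasurableSpace.comap (fun x : MarkedPartition => x.rel i j) ⊤) ⊔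
    (⨆ i : ℕ, MeasurableSpace.comap (fun x : MarkedPartition => x.v i) (inferInstance))

/-- Action of a permutation of `ℕ` on marked partitions. -/
def perm (σ : Equiv.Perm ℕ) (x : MarkedPartition) : MarkedPartition where
  rel i j := x.rel (σ i) (σ j)
  refl i := x.refl _
  symm h := x.symm h
  trans h h' := x.trans h h'
  v i := x.v (σ i)
  consistent h := x.consistent h

/-- The block containing `i`. -/
def block (x : MarkedPartition) (i : ℕ) : Set ℕ := {j | x.rel i j}

/-- Non-degenerate: every finite block has mark `0`. -/
def NonDegenerate (x : MarkedPartition) : Prop := ∀ i, (x.block i).Finite → x.v i = 0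

/-- Least element of the block containing `i`. -/
noncomputable def leastOf (x : MarkedPartition) (i : ℕ) : ℕ := sInf (x.block i)

open Classical in
/-- The label of the block of `x` containing `i`, blocks being labelled in increasing
order of their least elements (labels start at `1`). -/
noncomputable def label (x : MarkedPartition) (i : ℕ) : ℕ :=
  ((Finset.range (x.leastOf i + 1)).filter (fun m => x.leastOf m = m)).card

end MarkedPartition

/-- A permutation is finitely supported. -/
def FinSupp (σ : Equiv.Perm ℕ) : Prop := {n | σ n ≠ n}.Finite

/-- Lexicographic order on pairs `(s, v)`. -/
def lexLe (a b : ℝ × ℝ) : Prop := a.1 < b.1 ∨ (a.1 = b.1 ∧ a.2 ≤ b.2)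

/-- Membership in the space `Z↓`. -/
def MemZdown (z : ℕ → ℝ × ℝ) : Prop :=
  (∀ k, (z k).1 ∈ Set.Icc (0:ℝ) 1 ∧ 0 ≤ (z k).2) ∧
  (∀ k, lexLe (z (k + 1)) (z k)) ∧
  (∀ n, ∑ k ∈ Finset.range n, (z k).1 ≤ 1) ∧
  (∀ k, (z k).1 = 0 → (z k).2 = 0)

/-- `t_n = s_1 + … + s_n`. -/
def cumSum (z : ℕ → ℝ × ℝ) (n : ℕ) : ℝ := ∑ k ∈ Finset.range n, (z k).1

open Classical in
/-- Index of the paintbox interval containing `u`, if any. -/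
noncomputable def pbIdx (z : ℕ → ℝ × ℝ) (u : ℝ) : Option ℕ :=
  if h : ∃ n, cumSum z n ≤ u ∧ u < cumSum z (n + 1) then some (Nat.find h) else none

/-- The paintbox marked partition built from `z` and the sequence `u` of uniform samples. -/
noncomputable def paintbox (z : ℕ → ℝ × ℝ) (u : ℕ → ℝ) : MarkedPartition where
  rel i j := i = j ∨ ((pbIdx z (u i)).isSome ∧ pbIdx z (u i) = pbIdx z (u j))
  refl _ := Or.inl rfl
  symm h := by
    rcases h with h | ⟨hs, he⟩
    · exact Or.inl h.symm
    · exact Or.inr ⟨he ▸ hs, he.symm⟩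
  trans h h' := by
    rcases h with rfl | ⟨hs, he⟩
    · exact h'
    · rcases h' with rfl | ⟨hs', he'⟩
      · exact Or.inr ⟨hs, he⟩
      · exact Or.inr ⟨hs, he.trans he'⟩
  v i := (pbIdx z (u i)).elim 0 (fun n => (z n).2)
  consistent h := by
    rcases h with rfl | ⟨hs, he⟩
    · rfl
    · rw [he]

/-- The uniform distribution on `[0,1]`. -/
noncomputable def uniform01 : Measure ℝ := volume.restrict (Set.Icc 0 1)

/-- `U` is an i.i.d. sequence of uniform random variables on `[0,1]` under `μ`. -/
def IsIIDUniform {Θ : Type*} [MeasurableSpace Θ] (μ : Measure Θ) (U : ℕ → Θ → ℝ) : Prop :=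
  (∀ n, Measurable (U n)) ∧ iIndepFun U μ ∧
    ∀ n, μ.map (U n) = uniform01

/-- The paintbox measure `ρ_z`, the law of the paintbox construction driven by the
i.i.d. uniform sequence `U` defined on `(Θ, μ)`. -/
noncomputable def paintboxLaw {Θ : Type*} [MeasurableSpace Θ] (μ : Measure Θ)
    (U : ℕ → Θ → ℝ) (z : ℕ → ℝ × ℝ) : Measure MarkedPartition :=
  μ.map (fun θ => paintbox z (fun n => U n θ))

open Classical in
/-- `#(B ∩ [n]) / n`. -/
noncomputable def freqAvg (B : Set ℕ) (n : ℕ) : ℝ :=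
  (((Finset.range n).filter (fun j => j ∈ B)).card : ℝ) / n

/-- `B` has an asymptotic frequency. -/
def HasFreq (B : Set ℕ) : Prop := ∃ l : ℝ, Tendsto (freqAvg B) atTop (𝓝 l)

/-- The asymptotic frequency of `B` (junk value if the limit does not exist). -/
noncomputable def freq (B : Set ℕ) : ℝ := limUnder atTop (freqAvg B)

/-- `x` has asymptotic frequencies. -/
def MarkedPartition.HasFreqs (x : MarkedPartition) : Prop := ∀ i, HasFreq (x.block i)

/-- The set of least representatives of infinite blocks of `x` with positive asymptotic
frequency. -/
def MarkedPartition.posReps (x : MarkedPartition) : Set ℕ :=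
  {r | x.leastOf r = r ∧ (x.block r).Infinite ∧ 0 < freq (x.block r)}

/-- `g` is the `⪯`-nonincreasing enumeration `|x|↓` of the pairs
(asymptotic frequency, mark) over the infinite blocks of `x` with positive frequency,
completed by `(0,0)` terms. -/
def IsRankedFreqs (x : MarkedPartition) (g : ℕ → ℝ × ℝ) : Prop :=
  (∀ k, lexLe (g (k + 1)) (g k)) ∧
  ∃ e : ℕ → ℕ, Set.BijOn e {k | g k ≠ (0, 0)} x.posReps ∧
    ∀ k, g k ≠ (0, 0) → g k = (freq (x.block (e k)), x.v (e k))

open scoped ENNReal in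
/-- `v^θ` with the convention `0^θ = 0`, as an extended nonnegative real. -/
noncomputable def powE (v θ : ℝ) : ℝ≥0∞ := if v = 0 then 0 else ENNReal.ofReal (v ^ θ)

open Classical ENNReal in
/-- `S_θ^{(n)}(x) = Σ_B (mark of B)^θ`, the sum over the blocks `B` of the restriction
of `x` to `{1,…,n}` (blocks are recorded through their least element). -/
noncomputable def Sthetan (θ : ℝ) (n : ℕ) (x : MarkedPartition) : ℝ≥0∞ :=
  ∑ i ∈ Finset.range n, if ∀ j < i, ¬ x.rel i j then powE (x.v i) θ else 0


/-!
In the paintbox, the blocks of the restriction to `{1,…,n}` with a nonzero mark are the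
intervals `[t_k, t_{k+1})` hit by one of `U_1,…,U_n`, each recorded once through its first
visitor; every other block is a singleton of mark `0`. Hence `S_θ^{(n)}` is
`Σ_k v_k^θ · 1{some U_i, i ≤ n, lies in [t_k, t_{k+1})}`, and by independence that event has
probability `1 − (1 − s_k)^n`. As `n → ∞` these probabilities increase to `1` when `s_k > 0`,
while `s_k = 0` forces `v_k = 0`, so monotone convergence gives the limit.
-/

open scoped ENNReal

namespace MarkedPartition

theorem measurable_rel (i j : ℕ) : Measurable fun x : MarkedPartition => x.rel i j :=
  measurable_iff_comap_le.2 <| (le_iSup₂ (f := fun i j =>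
    MeasurableSpace.comap (fun x : MarkedPartition => x.rel i j) ⊤) i j).trans le_sup_left

theorem measurable_v (i : ℕ) : Measurable fun x : MarkedPartition => x.v i :=
  measurable_iff_comap_le.2 <| (le_iSup (fun i =>
    MeasurableSpace.comap (fun x : MarkedPartition => x.v i) inferInstance) i).trans le_sup_right

theorem measurable_of_forall {α : Type*} [MeasurableSpace α] {f : α → MarkedPartition}
    (hrel : ∀ i j, Measurable fun a => (f a).rel i j)
    (hv : ∀ i, Measurable fun a => (f a).v i) : Measurable f := by
  refine measurable_iff_comap_le.2 ?_
  simp only [instMeasurableSpace, MeasurableSpace.comap_sup, MeasurableSpace.comap_iSup,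
    MeasurableSpace.comap_comp]
  exact sup_le (iSup₂_le fun i j => (hrel i j).comap_le) (iSup_le fun i => (hv i).comap_le)

end MarkedPartition

theorem measurable_powE (θ : ℝ) : Measurable fun v : ℝ => powE v θ :=
  Measurable.ite (measurableSet_singleton 0) measurable_const
    (ENNReal.measurable_ofReal.comp (measurable_id.pow_const θ))

theorem measurable_Sthetan (θ : ℝ) (n : ℕ) : Measurable (Sthetan θ n) := by
  refine Finset.measurable_sum _ fun i _ => Measurable.ite ?_
    ((measurable_powE θ).comp (MarkedPartition.measurable_v i)) measurable_const
  simp only [Set.ofPred_forall]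
  exact .iInter fun j => .iInter fun _ =>
    (measurableSet_setOfPred.2 (MarkedPartition.measurable_rel i j)).compl

theorem Sthetan_mono (θ : ℝ) (x : MarkedPartition) : Monotone fun n => Sthetan θ n x :=
  fun _ _ hmn => Finset.sum_le_sum_of_subset (Finset.range_subset_range.2 hmn)

theorem Finset.sum_range_filter_forall_lt_ne_eq_sum_image {β M : Type*} [DecidableEq β]
    [AddCommMonoid M] (f : ℕ → β) (g : β → M) (n : ℕ) :
    ∑ i ∈ range n with ∀ j < i, f j ≠ f i, g (f i) = ∑ b ∈ (range n).image f, g b := by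
  have hinj : Set.InjOn f {i | i ∈ range n ∧ ∀ j < i, f j ≠ f i} := by
    rintro a ⟨-, ha⟩ b ⟨-, hb⟩ hab
    rcases lt_trichotomy a b with h | h | h
    exacts [(hb a h hab).elim, h, (ha b h hab.symm).elim]
  rw [← Finset.sum_image fun a ha b hb => hinj (by simpa using ha) (by simpa using hb)]
  congr 1
  refine (Finset.image_subset_image (Finset.filter_subset _ _)).antisymm fun b hb => ?_
  obtain ⟨i, hi, rfl⟩ := Finset.mem_image.1 hb
  have hex : ∃ j, f j = f i := ⟨i, rfl⟩
  have hle : Nat.find hex ≤ i := Nat.find_min' hex rfl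
  refine Finset.mem_image.2 ⟨Nat.find hex, Finset.mem_filter.2 ⟨?_, fun j hj => ?_⟩,
    Nat.find_spec hex⟩
  · exact Finset.mem_range.2 (hle.trans_lt (Finset.mem_range.1 hi))
  · exact (Nat.find_spec hex).symm ▸ Nat.find_min hex hj

theorem Finset.sum_option_elim_eq_tsum {M : Type*} [AddCommMonoid M] [TopologicalSpace M]
    (T : Finset (Option ℕ)) (w : ℕ → M) :
    ∑ b ∈ T, b.elim 0 w = ∑' k, if some k ∈ T then w k else 0 := by
  have hnone : ∀ b ∈ T, b ∉ Set.range some → b.elim 0 w = 0 := by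
    rintro (_ | k) _ hb
    exacts [rfl, (hb ⟨k, rfl⟩).elim]
  rw [← Finset.sum_preimage some T (Option.some_injective ℕ).injOn _ hnone,
    tsum_eq_sum (s := T.preimage some (Option.some_injective ℕ).injOn)
      fun k hk => if_neg (by simpa using hk)]
  exact Finset.sum_congr rfl fun k hk => (if_pos (by simpa using hk)).symm

section Paintbox

variable {z : ℕ → ℝ × ℝ}

theorem cumSum_mono (hs : ∀ k, 0 ≤ (z k).1) : Monotone (cumSum z) := fun _ _ hmn =>
  Finset.sum_le_sum_of_subset_of_nonneg (Finset.range_subset_range.2 hmn) fun k _ _ => hs k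

theorem cumSum_succ_sub_cumSum (k : ℕ) : cumSum z (k + 1) - cumSum z k = (z k).1 := by
  rw [cumSum, cumSum, Finset.sum_range_succ, add_sub_cancel_left]

theorem pbIdx_eq_some_iff (hcum : Monotone (cumSum z)) {u : ℝ} {k : ℕ} :
    pbIdx z u = some k ↔ u ∈ Set.Ico (cumSum z k) (cumSum z (k + 1)) := by
  unfold pbIdx
  split_ifs with h
  · refine ⟨fun hk => Option.some_injective _ hk ▸ Nat.find_spec h, fun hu => ?_⟩
    refine congrArg some ((Nat.find_le hu).antisymm (not_lt.1 fun hlt => ?_))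
    -- the intervals are disjoint: `u < t_{m+1} ≤ t_k ≤ u` for the first index `m < k`
    exact (Nat.find_spec h).2.not_ge ((hcum hlt).trans hu.1)
  · exact ⟨False.elim, fun hu => h ⟨k, hu⟩⟩

local instance : MeasurableSpace (Option ℕ) := ⊤

local instance : DiscreteMeasurableSpace (Option ℕ) := ⟨fun _ => trivial⟩

theorem measurable_pbIdx (hcum : Monotone (cumSum z)) : Measurable (pbIdx z) := by
  have hsome (k : ℕ) : MeasurableSet (pbIdx z ⁻¹' {some k}) := by
    rw [show pbIdx z ⁻¹' {some k} = Set.Ico (cumSum z k) (cumSum z (k + 1)) from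
      Set.ext fun _ => pbIdx_eq_some_iff hcum]
    exact measurableSet_Ico
  refine measurable_to_countable' fun
    | some k => hsome k
    | none => ?_
  have : pbIdx z ⁻¹' {none} = (⋃ k, pbIdx z ⁻¹' {some k})ᶜ := by
    ext u
    simp [Option.eq_none_iff_forall_ne_some]
  exact this ▸ (MeasurableSet.iUnion hsome).compl

theorem measurable_paintbox (hcum : Monotone (cumSum z)) {Θ : Type*} [MeasurableSpace Θ]
    {U : ℕ → Θ → ℝ} (hU : ∀ i, Measurable (U i)) :
    Measurable fun ω => paintbox z (U · ω) := by
  have hidx (i : ℕ) : Measurable fun ω => pbIdx z (U i ω) := (measurable_pbIdx hcum).comp (hU i)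
  refine MarkedPartition.measurable_of_forall (fun i j => ?_) fun i => ?_
  · exact measurable_const.or <| (Measurable.of_discrete (f := fun b : Option ℕ × Option ℕ =>
      b.1.isSome ∧ b.1 = b.2)).comp ((hidx i).prodMk (hidx j))
  · exact (Measurable.of_discrete (f := fun b : Option ℕ => b.elim 0 fun k => (z k).2)).comp
      (hidx i)

theorem Sthetan_paintbox (θ : ℝ) (u : ℕ → ℝ) (n : ℕ) :
    Sthetan θ n (paintbox z u) =
      ∑' k, if ∃ i < n, pbIdx z (u i) = some k then powE (z k).2 θ else 0 := by
  classical
  let g : Option ℕ → ℝ≥0∞ := fun b => b.elim 0 fun k => powE (z k).2 θ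
  have hterm (i : ℕ) :
      (if ∀ j < i, ¬ (paintbox z u).rel i j then powE ((paintbox z u).v i) θ else 0) =
        if ∀ j < i, pbIdx z (u j) ≠ pbIdx z (u i) then g (pbIdx z (u i)) else 0 := by
    have hv : (paintbox z u).v i = (pbIdx z (u i)).elim 0 fun k => (z k).2 := rfl
    rcases hi : pbIdx z (u i) with _ | k
    · simp [g, hv, hi, powE]
    · have hrel : ∀ j < i, ((paintbox z u).rel i j ↔ pbIdx z (u j) = some k) := fun j hj => by
        change i = j ∨ ((pbIdx z (u i)).isSome ∧ pbIdx z (u i) = pbIdx z (u j)) ↔ _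
        simp [hi, hj.ne', eq_comm]
      rw [hv, hi]
      exact if_congr (forall₂_congr fun j hj => not_congr (hrel j hj)) rfl rfl
  calc Sthetan θ n (paintbox z u)
      = ∑ i ∈ Finset.range n with ∀ j < i, pbIdx z (u j) ≠ pbIdx z (u i), g (pbIdx z (u i)) := by
        rw [Finset.sum_filter]
        exact Finset.sum_congr rfl fun i _ => hterm i
    _ = ∑ b ∈ (Finset.range n).image fun i => pbIdx z (u i), g b :=
        Finset.sum_range_filter_forall_lt_ne_eq_sum_image _ g n
    _ = _ := by
        rw [Finset.sum_option_elim_eq_tsum]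
        simp

end Paintbox

theorem ENNReal.one_sub_pow_one_sub_ofReal {s : ℝ} (h0 : 0 ≤ s) (h1 : s ≤ 1) (n : ℕ) :
    1 - (1 - ENNReal.ofReal s) ^ n = ENNReal.ofReal (1 - (1 - s) ^ n) := by
  rw [ENNReal.ofReal_sub _ (pow_nonneg (sub_nonneg.2 h1) n), ENNReal.ofReal_one,
    ENNReal.ofReal_pow (sub_nonneg.2 h1), ENNReal.ofReal_sub _ h0, ENNReal.ofReal_one]

theorem ENNReal.tendsto_tsum_of_monotone {α : Type*} {f : ℕ → α → ℝ≥0∞} {F : α → ℝ≥0∞}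
    (hmono : Monotone f) (hlim : ∀ a, Tendsto (fun n => f n a) atTop (𝓝 (F a))) :
    Tendsto (fun n => ∑' a, f n a) atTop (𝓝 (∑' a, F a)) := by
  have hF : F = fun a => ⨆ n, f n a := funext fun a =>
    tendsto_nhds_unique (hlim a) (tendsto_atTop_iSup fun _ _ h => hmono h a)
  have hsup : ∑' a, ⨆ n, f n a = ⨆ n, ∑' a, f n a := by
    simp_rw [ENNReal.tsum_eq_iSup_sum,
      ENNReal.finsetSum_iSup_of_monotone fun a _ _ h => hmono h a]
    exact iSup_comm
  rw [hF, hsup]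
  exact tendsto_atTop_iSup fun _ _ h => ENNReal.tsum_le_tsum fun a => hmono h a

theorem tendsto_ofReal_one_sub_one_sub_pow {s : ℝ} (h0 : 0 < s) (h1 : s ≤ 1) :
    Tendsto (fun n : ℕ => ENNReal.ofReal (1 - (1 - s) ^ n)) atTop (𝓝 1) := by
  have := (tendsto_pow_atTop_nhds_zero_of_lt_one (sub_nonneg.2 h1)
    (sub_lt_self 1 h0)).const_sub 1
  simpa using ENNReal.tendsto_ofReal this

theorem tendsto_tsum_ofReal_one_sub_one_sub_pow_mul {s : ℕ → ℝ} {w : ℕ → ℝ≥0∞}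
    (hs : ∀ k, s k ∈ Set.Icc 0 1) (hw : ∀ k, s k = 0 → w k = 0) :
    Tendsto (fun n => ∑' k, ENNReal.ofReal (1 - (1 - s k) ^ n) * w k) atTop
      (𝓝 (∑' k, w k)) := by
  refine ENNReal.tendsto_tsum_of_monotone (fun m n hmn k => ?_) fun k => ?_
  · have hpow := pow_le_pow_of_le_one (sub_nonneg.2 (hs k).2) (sub_le_self 1 (hs k).1) hmn
    gcongr
  · rcases (hs k).1.eq_or_lt with h | h
    · simp [hw k h.symm]
    · simpa using ENNReal.Tendsto.mul_const (tendsto_ofReal_one_sub_one_sub_pow h (hs k).2)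
        (Or.inl one_ne_zero)

theorem uniform01_Ico {a b : ℝ} (ha : 0 ≤ a) (hb : b ≤ 1) :
    uniform01 (Set.Ico a b) = ENNReal.ofReal (b - a) := by
  rw [uniform01, Measure.restrict_apply measurableSet_Ico, Set.inter_eq_self_of_subset_left
    (Set.Ico_subset_Icc_self.trans (Set.Icc_subset_Icc ha hb)), Real.volume_Ico]

theorem measure_biUnion_range_preimage {Θ β : Type*} [MeasurableSpace Θ] [MeasurableSpace β]
    {Q : Measure Θ} [IsProbabilityMeasure Q] {U : ℕ → Θ → β} {ν : Measure β}
    (hmeas : ∀ i, Measurable (U i)) (hind : iIndepFun U Q) (hlaw : ∀ i, Q.map (U i) = ν)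
    {S : Set β} (hS : MeasurableSet S) (n : ℕ) :
    Q (⋃ i ∈ Finset.range n, U i ⁻¹' S) = 1 - (1 - ν S) ^ n := by
  have hmiss (i : ℕ) : Q (U i ⁻¹' Sᶜ) = 1 - ν S := by
    rw [Set.preimage_compl, prob_compl_eq_one_sub (hmeas i hS), ← Measure.map_apply (hmeas i) hS,
      hlaw]
  have hnone : Q (⋂ i ∈ Finset.range n, U i ⁻¹' Sᶜ) = (1 - ν S) ^ n := by
    rw [hind.meas_biInter fun i _ => ⟨Sᶜ, hS.compl, rfl⟩, Finset.prod_congr rfl fun i _ => hmiss i,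
      Finset.prod_const, Finset.card_range]
  rw [← compl_compl (⋃ i ∈ Finset.range n, U i ⁻¹' S), Set.compl_iUnion₂]
  simp_rw [← Set.preimage_compl]
  rw [prob_compl_eq_one_sub (Finset.measurableSet_biInter _ fun i _ => hmeas i hS.compl), hnone]

theorem lintegral_Sthetan_paintboxLaw {Θ : Type*} [MeasurableSpace Θ] {Q : Measure Θ}
    [IsProbabilityMeasure Q] {U : ℕ → Θ → ℝ} (hU : IsIIDUniform Q U) {z : ℕ → ℝ × ℝ}
    (hz : MemZdown z) (θ : ℝ) (n : ℕ) :
    ∫⁻ x, Sthetan θ n x ∂paintboxLaw Q U z =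
      ∑' k, ENNReal.ofReal (1 - (1 - (z k).1) ^ n) * powE (z k).2 θ := by
  obtain ⟨hmeas, hind, hlaw⟩ := hU
  have hmono := cumSum_mono fun k => (hz.1 k).1.1
  let hit (k : ℕ) : Set Θ :=
    ⋃ i ∈ Finset.range n, U i ⁻¹' Set.Ico (cumSum z k) (cumSum z (k + 1))
  have hhit (k : ℕ) : MeasurableSet (hit k) :=
    Finset.measurableSet_biUnion _ fun i _ => hmeas i measurableSet_Ico
  have hQ (k : ℕ) : Q (hit k) = ENNReal.ofReal (1 - (1 - (z k).1) ^ n) := by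
    rw [measure_biUnion_range_preimage hmeas hind hlaw measurableSet_Ico,
      uniform01_Ico (a := cumSum z k) (b := cumSum z (k + 1))
        (Finset.sum_nonneg fun i _ => (hz.1 i).1.1) (hz.2.2.1 _),
      cumSum_succ_sub_cumSum, ENNReal.one_sub_pow_one_sub_ofReal (hz.1 k).1.1 (hz.1 k).1.2]
  calc ∫⁻ x, Sthetan θ n x ∂paintboxLaw Q U z
      = ∫⁻ ω, ∑' k, (hit k).indicator (fun _ => powE (z k).2 θ) ω ∂Q := by
        rw [paintboxLaw, lintegral_map (measurable_Sthetan θ n) (measurable_paintbox hmono hmeas)]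
        refine lintegral_congr fun ω => ?_
        rw [Sthetan_paintbox]
        classical
        refine tsum_congr fun k => ?_
        rw [Set.indicator_apply]
        exact if_congr (by simp only [hit, Set.mem_iUnion₂, Finset.mem_range, Set.mem_preimage,
          pbIdx_eq_some_iff hmono, exists_prop]) rfl rfl
    _ = ∑' k, powE (z k).2 θ * Q (hit k) := by
        rw [lintegral_tsum fun k => (measurable_const.indicator (hhit k)).aemeasurable]
        simp_rw [lintegral_indicator_const (hhit _)]
    _ = _ := by simp_rw [hQ, mul_comm]

/-- **Moments of restricted paintboxes.** For `z ∈ Z↓`, `θ ∈ ℝ` and `n ≥ 1`,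
`∫ S_θ^{(n)} dρ_z = Σ_i (1 − (1 − s_i)^n)·v_i^θ`; in particular `n ↦ ∫ S_θ^{(n)} dρ_z`
is nondecreasing and converges to `Σ_i v_i^θ`. -/
theorem paintboxLaw_Sthetan
    {Θ : Type} [MeasurableSpace Θ] (Q : Measure Θ) [IsProbabilityMeasure Q]
    (U : ℕ → Θ → ℝ) (hU : IsIIDUniform Q U)
    (z : ℕ → ℝ × ℝ) (hz : MemZdown z) (θ : ℝ) :
    (∀ n, 1 ≤ n →
      ∫⁻ x, Sthetan θ n x ∂(paintboxLaw Q U z) =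
        ∑' i : ℕ, ENNReal.ofReal (1 - (1 - (z i).1) ^ n) * powE (z i).2 θ) ∧
    Monotone (fun n => ∫⁻ x, Sthetan θ n x ∂(paintboxLaw Q U z)) ∧
    Tendsto (fun n => ∫⁻ x, Sthetan θ n x ∂(paintboxLaw Q U z)) atTop
      (𝓝 (∑' i : ℕ, powE (z i).2 θ)) := by
  have hformula := lintegral_Sthetan_paintboxLaw hU hz θ
  refine ⟨fun n _ => hformula n, fun m n hmn => lintegral_mono fun x => Sthetan_mono θ x hmn, ?_⟩
  simp_rw [hformula]
  exact tendsto_tsum_ofReal_one_sub_one_sub_pow_mul (fun k => (hz.1 k).1)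
    fun k hk => by simp [hz.2.2.2 k hk, powE]
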